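/- arXiv:math/0601419 — 3 statements merged into one kernel-verified Lean document; each statement's English description precedes it below -/
import Mathlib

section
/- Let V and W be two-dimensional real vector spaces with fixed nonzero antisymmetric bilinear forms ε on V and ε' on W. Then every bilinear form F on V ⊗ W that is antisymmetric (F(u ⊗ w, u' ⊗ w') = −F(u' ⊗ w', u ⊗ w)) decomposes uniquely as F = φ ⊗ ε + ψ ⊗ ε', where φ is a symmetric bilinear form on W tensored with ε on V, and ψ is a symmetric bilinear form on V tensored with ε' on W. In index notation: F_{AA'BB'} = φ_{A'B'} ε_{AB} + ψ_{AB} ε_{A'B'} with φ_{A'B'} = φ_{B'A'} and ψ_{AB} = ψ_{BA}, and φ, ψ are uniquely determined by F. -/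
/-- Spinor decomposition of an antisymmetric bilinear form on `V ⊗ W` (in index form):
`F_{AA'BB'} = φ_{A'B'} ε_{AB} + ψ_{AB} ε'_{A'B'}` with `φ, ψ` symmetric and unique. -/
theorem two_form_spinor_decomposition
    (ε ε' : Fin 2 → Fin 2 → ℝ)
    (hε : ∀ A B, ε A B = -ε B A) (hε' : ∀ A B, ε' A B = -ε' B A)
    (hεne : ε ≠ 0) (hε'ne : ε' ≠ 0)
    (F : Fin 2 → Fin 2 → Fin 2 → Fin 2 → ℝ)
    (hF : ∀ A A' B B', F A A' B B' = -F B B' A A') :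
    ∃! p : (Fin 2 → Fin 2 → ℝ) × (Fin 2 → Fin 2 → ℝ),
      (∀ A' B', p.1 A' B' = p.1 B' A') ∧ (∀ A B, p.2 A B = p.2 B A) ∧
      (∀ A A' B B', F A A' B B' = p.1 A' B' * ε A B + p.2 A B * ε' A' B') := by
  set a := ε 0 1 with ha
  set b := ε' 0 1 with hb
  have hε00 : ε 0 0 = 0 := by have := hε 0 0; linarith
  have hε11 : ε 1 1 = 0 := by have := hε 1 1; linarith
  have hε10 : ε 1 0 = -a := by have := hε 1 0; linarith
  have hε'00 : ε' 0 0 = 0 := by have := hε' 0 0; linarith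
  have hε'11 : ε' 1 1 = 0 := by have := hε' 1 1; linarith
  have hε'10 : ε' 1 0 = -b := by have := hε' 1 0; linarith
  have hane : a ≠ 0 := by
    intro h
    apply hεne
    funext A B
    fin_cases A <;> fin_cases B <;>
      simp only [Fin.zero_eta, Fin.mk_one, Pi.zero_apply] <;> linarith
  have hbne : b ≠ 0 := by
    intro h
    apply hε'ne
    funext A B
    fin_cases A <;> fin_cases B <;>
      simp only [Fin.zero_eta, Fin.mk_one, Pi.zero_apply] <;> linarith
  have z1 : F 0 0 0 0 = 0 := by have := hF 0 0 0 0; linarith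
  have z2 : F 0 1 0 1 = 0 := by have := hF 0 1 0 1; linarith
  have z3 : F 1 0 1 0 = 0 := by have := hF 1 0 1 0; linarith
  have z4 : F 1 1 1 1 = 0 := by have := hF 1 1 1 1; linarith
  have r1 : F 0 1 0 0 = -F 0 0 0 1 := by have := hF 0 1 0 0; linarith [hF 0 0 0 1]
  have r2 : F 1 0 0 0 = -F 0 0 1 0 := by have := hF 1 0 0 0; linarith [hF 0 0 1 0]
  have r3 : F 1 1 0 0 = -F 0 0 1 1 := by have := hF 1 1 0 0; linarith [hF 0 0 1 1]
  have r4 : F 1 0 0 1 = -F 0 1 1 0 := by have := hF 1 0 0 1; linarith [hF 0 1 1 0]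
  have r5 : F 1 1 0 1 = -F 0 1 1 1 := by have := hF 1 1 0 1; linarith [hF 0 1 1 1]
  have r6 : F 1 1 1 0 = -F 1 0 1 1 := by have := hF 1 1 1 0; linarith [hF 1 0 1 1]
  refine ⟨⟨fun A' B' => (F 0 A' 1 B' - F 1 A' 0 B') / (2 * a),
          fun A B => (F A 0 B 1 + F B 0 A 1) / (2 * b)⟩, ⟨?_, ?_, ?_⟩, ?_⟩
  · intro A' B'
    have h1 := hF 0 B' 1 A'
    have h2 := hF 1 B' 0 A'
    simp only
    rw [h1, h2]
    ring
  · intro A B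
    simp only
    ring
  · intro A A' B B'
    simp only
    fin_cases A <;> fin_cases A' <;> fin_cases B <;> fin_cases B' <;>
      simp only [Fin.zero_eta, Fin.mk_one, z1, z2, z3, z4, r1, r2, r3, r4, r5, r6,
        hε00, hε11, hε10, hε'00, hε'11, hε'10] <;>
      field_simp <;> ring
  · rintro ⟨χ, ω⟩ ⟨hχs, hωs, hdec⟩
    have hχ : χ = fun A' B' => (F 0 A' 1 B' - F 1 A' 0 B') / (2 * a) := by
      funext A' B'
      have h1 : F 0 A' 1 B' = χ A' B' * ε 0 1 + ω 0 1 * ε' A' B' := hdec 0 A' 1 B'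
      have h2 : F 1 A' 0 B' = χ A' B' * ε 1 0 + ω 1 0 * ε' A' B' := hdec 1 A' 0 B'
      have h3 : ω 0 1 = ω 1 0 := hωs 0 1
      rw [h1, h2, hε10, h3, ← ha]
      field_simp
      ring
    have hω : ω = fun A B => (F A 0 B 1 + F B 0 A 1) / (2 * b) := by
      funext A B
      have h1 : F A 0 B 1 = χ 0 1 * ε A B + ω A B * ε' 0 1 := hdec A 0 B 1
      have h2 : F B 0 A 1 = χ 0 1 * ε B A + ω B A * ε' 0 1 := hdec B 0 A 1
      have h3 : χ 0 1 = χ 1 0 := hχs 0 1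
      have h4 : ω B A = ω A B := hωs B A
      have h5 : ε B A = -ε A B := hε B A
      rw [h1, h2, h4, h5, ← hb]
      field_simp
      ring
    simp only [Prod.mk.injEq]
    exact ⟨hχ, hω⟩
end

section
/- Let ι, o ∈ ℝ² be vectors and for each pair of indices (B,B') let u_{BB'} ∈ ℝ², v_{BB'} ∈ ℝ² be given, together with a symmetric matrix φ_{A'B'}, a symmetric matrix ψ_{AB}, and a scalar η, satisfying for all indices: o_{A'} u_{BB',A} + ι_A v_{BB',A'} = φ_{A'B'} ε_{AB} + ψ_{AB} ε_{A'B'} + (1/2) η ε_{AB} ε_{A'B'}, where ε is the standard symplectic form on ℝ² (ε_{01}=1). Then ι^A ι^B ψ_{AB} = 0 and o^{A'} o^{B'} φ_{A'B'} = 0, where indices are raised with ε. -/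
open scoped BigOperators

/-- The standard symplectic form `ε` on `ℝ²`, with `ε₀₁ = 1`. -/
noncomputable def eps : Matrix (Fin 2) (Fin 2) ℝ := !![0, 1; -1, 0]

/-- Index raising `μ^A = μ_B ε^{BA}`. -/
noncomputable def raise (μ : Fin 2 → ℝ) (A : Fin 2) : ℝ := ∑ B, μ B * eps B A

lemma key_aux (a b W0 W1 S : ℝ) (h00 : a * W0 = 0) (h01 : a * W1 = S)
    (h10 : b * W0 = -S) (h11 : b * W1 = 0) : S = 0 := by
  have hS : S * S = 0 := by
    linear_combination (-S) * h01 + (a * W1) * h10 - (b * W1) * h00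
  exact mul_self_eq_zero.mp hS

/-- Pointwise content of Lemma 2.1: if
`o_{A'} u_{BB'A} + ι_A v_{BB'A'} = φ_{A'B'} ε_{AB} + ψ_{AB} ε_{A'B'} + ½η ε_{AB}ε_{A'B'}`
with `φ, ψ` symmetric, then `ι^Aι^Bψ_{AB} = 0` and `o^{A'}o^{B'}φ_{A'B'} = 0`. -/
theorem null_conformal_killing_algebraic_identities
    (ι o : Fin 2 → ℝ)
    (u v : Fin 2 → Fin 2 → Fin 2 → ℝ)
    (φ ψ : Fin 2 → Fin 2 → ℝ) (η : ℝ)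
    (hφ : ∀ A' B', φ A' B' = φ B' A') (hψ : ∀ A B, ψ A B = ψ B A)
    (h : ∀ A A' B B',
      o A' * u B B' A + ι A * v B B' A' =
        φ A' B' * eps A B + ψ A B * eps A' B'
          + (1 / 2) * η * eps A B * eps A' B') :
    (∑ A, ∑ B, raise ι A * raise ι B * ψ A B = 0) ∧
    (∑ A', ∑ B', raise o A' * raise o B' * φ A' B' = 0) := by
  simp only [eps] at h
  have h0000 := h 0 0 0 0; have h0001 := h 0 0 0 1
  have h0010 := h 0 0 1 0; have h0011 := h 0 0 1 1
  have h0100 := h 0 1 0 0; have h0101 := h 0 1 0 1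
  have h0110 := h 0 1 1 0; have h0111 := h 0 1 1 1
  have h1000 := h 1 0 0 0; have h1001 := h 1 0 0 1
  have h1010 := h 1 0 1 0; have h1011 := h 1 0 1 1
  have h1100 := h 1 1 0 0; have h1101 := h 1 1 0 1
  have h1110 := h 1 1 1 0; have h1111 := h 1 1 1 1
  norm_num [Matrix.of_apply, Matrix.cons_val_zero, Matrix.cons_val_one, Matrix.head_cons] at h0000 h0001 h0010 h0011 h0100 h0101 h0110 h0111 h1000 h1001 h1010 h1011 h1100 h1101 h1110 h1111
  -- the contracted quantities
  set S : ℝ := ι 1 * ι 1 * ψ 0 0 - ι 1 * ι 0 * ψ 0 1 - ι 0 * ι 1 * ψ 1 0 + ι 0 * ι 0 * ψ 1 1 with hS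
  set T : ℝ := o 1 * o 1 * φ 0 0 - o 1 * o 0 * φ 0 1 - o 0 * o 1 * φ 1 0 + o 0 * o 0 * φ 1 1 with hT
  set W : Fin 2 → ℝ := fun b => (ι 1 * ι 1 * u 0 b 0 - ι 1 * ι 0 * u 1 b 0
      - ι 0 * ι 1 * u 0 b 1 + ι 0 * ι 0 * u 1 b 1) with hW
  set V : Fin 2 → ℝ := fun b => (o 1 * o 1 * v b 0 0 - o 1 * o 0 * v b 1 0
      - o 0 * o 1 * v b 0 1 + o 0 * o 0 * v b 1 1) with hV
  constructor
  · have hF00 : o 0 * W 0 = 0 := by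
      simp only [hW]
      linear_combination (ι 1 * ι 1) * h0000 - (ι 1 * ι 0) * h0010
        - (ι 0 * ι 1) * h1000 + (ι 0 * ι 0) * h1010
    have hF01 : o 0 * W 1 = S := by
      simp only [hW, hS]
      linear_combination (ι 1 * ι 1) * h0001 - (ι 1 * ι 0) * h0011
        - (ι 0 * ι 1) * h1001 + (ι 0 * ι 0) * h1011
    have hF10 : o 1 * W 0 = -S := by
      simp only [hW, hS]
      linear_combination (ι 1 * ι 1) * h0100 - (ι 1 * ι 0) * h0110
        - (ι 0 * ι 1) * h1100 + (ι 0 * ι 0) * h1110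
    have hF11 : o 1 * W 1 = 0 := by
      simp only [hW]
      linear_combination (ι 1 * ι 1) * h0101 - (ι 1 * ι 0) * h0111
        - (ι 0 * ι 1) * h1101 + (ι 0 * ι 0) * h1111
    have hzero := key_aux (o 0) (o 1) (W 0) (W 1) S hF00 hF01 hF10 hF11
    norm_num [raise, eps, Fin.sum_univ_two, Matrix.of_apply, Matrix.cons_val_zero,
      Matrix.cons_val_one, Matrix.head_cons]
    linear_combination hzero
  · have hG00 : ι 0 * V 0 = 0 := by
      simp only [hV]
      linear_combination (o 1 * o 1) * h0000 - (o 1 * o 0) * h0001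
        - (o 0 * o 1) * h0100 + (o 0 * o 0) * h0101
    have hG01 : ι 0 * V 1 = T := by
      simp only [hV, hT]
      linear_combination (o 1 * o 1) * h0010 - (o 1 * o 0) * h0011
        - (o 0 * o 1) * h0110 + (o 0 * o 0) * h0111
    have hG10 : ι 1 * V 0 = -T := by
      simp only [hV, hT]
      linear_combination (o 1 * o 1) * h1000 - (o 1 * o 0) * h1001
        - (o 0 * o 1) * h1100 + (o 0 * o 0) * h1101
    have hG11 : ι 1 * V 1 = 0 := by
      simp only [hV]
      linear_combination (o 1 * o 1) * h1010 - (o 1 * o 0) * h1011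
        - (o 0 * o 1) * h1110 + (o 0 * o 0) * h1111
    have hzero := key_aux (ι 0) (ι 1) (V 0) (V 1) T hG00 hG01 hG10 hG11
    norm_num [raise, eps, Fin.sum_univ_two, Matrix.of_apply, Matrix.cons_val_zero,
      Matrix.cons_val_one, Matrix.head_cons]
    linear_combination hzero
end

section
/- Let Γ and Γ̃ be two torsion-free affine connections on an open set U ⊆ ℝ², with sprays Θ = v^i ∂_{s^i} − Γ^i_{jk} v^j v^k ∂_{v^i} and Θ̃ = v^i ∂_{s^i} − Γ̃^i_{jk} v^j v^k ∂_{v^i} on TU. Then Θ − Θ̃ is proportional at every point of TU ∖ {0} to the Euler vector field E = v^i ∂_{v^i} if and only if there is a one-form a_i on U with Γ̃^i_{jk} − Γ^i_{jk} = a_j δ^i_k + a_k δ^i_j. -/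
open scoped BigOperators

/-- Two torsion-free connections on `U ⊆ ℝ²` have sprays differing by a multiple of the Euler
vector field at every point of `TU ∖ {0}` iff they differ by
`Γ̃^i_{jk} - Γ^i_{jk} = a_j δ^i_k + a_k δ^i_j` for some one-form `a`. -/
theorem sprays_projectively_equivalent_iff
    (U : Set (Fin 2 → ℝ))
    (Γ Γ' : (Fin 2 → ℝ) → Fin 2 → Fin 2 → Fin 2 → ℝ)
    (hΓ : ∀ s i j k, Γ s i j k = Γ s i k j)
    (hΓ' : ∀ s i j k, Γ' s i j k = Γ' s i k j) :
    (∀ s ∈ U, ∀ v : Fin 2 → ℝ, v ≠ 0 → ∃ f : ℝ,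
        ∀ i, (∑ j, ∑ k, (Γ' s i j k - Γ s i j k) * v j * v k) = f * v i)
    ↔ ∃ a : (Fin 2 → ℝ) → Fin 2 → ℝ, ∀ s ∈ U, ∀ i j k,
        Γ' s i j k - Γ s i j k =
          a s j * (if i = k then 1 else 0) + a s k * (if i = j then 1 else 0) := by
  constructor
  · intro h
    refine ⟨fun s => ![(Γ' s 0 0 0 - Γ s 0 0 0)/2, (Γ' s 1 1 1 - Γ s 1 1 1)/2], ?_⟩
    intro s hs
    obtain ⟨f1, h1⟩ := h s hs ![1,0] (by
      intro hv; have := congrFun hv 0; simp at this)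
    obtain ⟨f2, h2⟩ := h s hs ![0,1] (by
      intro hv; have := congrFun hv 1; simp at this)
    obtain ⟨f3, h3⟩ := h s hs ![1,1] (by
      intro hv; have := congrFun hv 0; simp at this)
    obtain ⟨f4, h4⟩ := h s hs ![1,-1] (by
      intro hv; have := congrFun hv 0; simp at this)
    have e10 := h1 0; have e11 := h1 1
    have e20 := h2 0; have e21 := h2 1
    have e30 := h3 0; have e31 := h3 1
    have e40 := h4 0; have e41 := h4 1
    simp [Fin.sum_univ_two] at e10 e11 e20 e21 e30 e31 e40 e41
    have s0 := hΓ s 0 0 1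
    have s1 := hΓ s 1 0 1
    have s0' := hΓ' s 0 0 1
    have s1' := hΓ' s 1 0 1
    intro i j k
    fin_cases i <;> fin_cases j <;> fin_cases k <;>
      simp <;> linarith
  · rintro ⟨a, ha⟩ s hs v hv
    refine ⟨2 * (a s 0 * v 0 + a s 1 * v 1), fun i => ?_⟩
    simp only [Fin.sum_univ_two]
    rw [ha s hs i 0 0, ha s hs i 0 1, ha s hs i 1 0, ha s hs i 1 1]
    fin_cases i <;> simp <;> ring
end
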